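/- If K = MΓ devices must each be scheduled at least once in every window of Γ consecutive slots, with at most M devices per slot, then each device is scheduled exactly once per Γ slots, exactly M devices are scheduled in every slot, and the schedule in slots Γ+1,...,2Γ must repeat the schedule of slots 1,...,Γ (each device is scheduled exactly Γ slots after its previous scheduling). -/
import Mathlib


/-- When `K = M Γ` and every device must appear in every window of `Γ`
consecutive slots while at most `M` devices are scheduled per slot, the
schedule is forced: exactly `M` devices per slot, each device exactly once per
window of `Γ` slots, and the schedule is cyclic with period `Γ`. -/
theorem cyclic_schedule_forced (M Γ K : ℕ) (hM : 0 < M) (hΓ : 0 < Γ)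
    (hK : K = M * Γ) (S : ℕ → Finset (Fin K))
    (hcard : ∀ t, 1 ≤ t → (S t).card ≤ M)
    (hwin : ∀ k : Fin K, ∀ t0, 1 ≤ t0 →
      ∃ t ∈ Finset.Icc t0 (t0 + Γ - 1), k ∈ S t) :
    (∀ t, 1 ≤ t → (S t).card = M) ∧
    (∀ k : Fin K, ∀ t0, 1 ≤ t0 →
      ((Finset.Icc t0 (t0 + Γ - 1)).filter (fun t => k ∈ S t)).card = 1) ∧
    (∀ t, 1 ≤ t → S (t + Γ) = S t) := by
  have hWcard : ∀ t0 : ℕ, 1 ≤ t0 → (Finset.Icc t0 (t0 + Γ - 1)).card = Γ := by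
    intro t0 ht0; rw [Nat.card_Icc]; omega
  have key : ∀ t0 : ℕ, 1 ≤ t0 →
      (∀ t ∈ Finset.Icc t0 (t0 + Γ - 1), (S t).card = M) ∧
      (∀ k : Fin K,
        ((Finset.Icc t0 (t0 + Γ - 1)).filter (fun t => k ∈ S t)).card = 1) := by
    intro t0 ht0
    set W := Finset.Icc t0 (t0 + Γ - 1) with hW
    have hswap : ∑ t ∈ W, (S t).card
        = ∑ k : Fin K, (W.filter (fun t => k ∈ S t)).card := by
      have h1 : ∀ t, (S t).card = ∑ k : Fin K, if k ∈ S t then 1 else 0 := by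
        intro t
        rw [← Finset.card_filter]
        congr 1
        ext k
        simp
      calc ∑ t ∈ W, (S t).card
          = ∑ t ∈ W, ∑ k : Fin K, if k ∈ S t then 1 else 0 := by
            exact Finset.sum_congr rfl (fun t _ => h1 t)
        _ = ∑ k : Fin K, ∑ t ∈ W, if k ∈ S t then 1 else 0 := Finset.sum_comm
        _ = ∑ k : Fin K, (W.filter (fun t => k ∈ S t)).card := by
            exact Finset.sum_congr rfl (fun k _ => (Finset.card_filter _ _).symm)
    have hle : ∑ t ∈ W, (S t).card ≤ K := by
      calc ∑ t ∈ W, (S t).card ≤ ∑ t ∈ W, M := by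
            apply Finset.sum_le_sum
            intro t ht
            exact hcard t (le_trans ht0 (Finset.mem_Icc.mp ht).1)
        _ = W.card * M := by rw [Finset.sum_const, smul_eq_mul]
        _ = K := by rw [hWcard t0 ht0, hK, Nat.mul_comm]
    have hone : ∀ k : Fin K, 1 ≤ (W.filter (fun t => k ∈ S t)).card := by
      intro k
      obtain ⟨t, ht, hkt⟩ := hwin k t0 ht0
      have : t ∈ W.filter (fun t => k ∈ S t) := Finset.mem_filter.mpr ⟨ht, hkt⟩
      exact Finset.card_pos.mpr ⟨t, this⟩
    have hge : K ≤ ∑ k : Fin K, (W.filter (fun t => k ∈ S t)).card := by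
      calc K = ∑ _k : Fin K, 1 := by simp
        _ ≤ _ := Finset.sum_le_sum (fun k _ => hone k)
    have heq : ∑ t ∈ W, (S t).card = K := le_antisymm hle (hswap ▸ hge)
    constructor
    · intro t ht
      have hsum : ∑ t ∈ W, (S t).card = ∑ _t ∈ W, M := by
        rw [heq, Finset.sum_const, smul_eq_mul, hWcard t0 ht0, hK, Nat.mul_comm]
      exact (Finset.sum_eq_sum_iff_of_le
        (fun t ht => hcard t (le_trans ht0 (Finset.mem_Icc.mp ht).1))).mp hsum t ht
    · intro k
      have hsum : ∑ _k : Fin K, 1 = ∑ k : Fin K, (W.filter (fun t => k ∈ S t)).card := by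
        rw [← hswap, heq]; simp
      exact ((Finset.sum_eq_sum_iff_of_le (fun k _ => hone k)).mp hsum k
        (Finset.mem_univ k)).symm
  have honce : ∀ k : Fin K, ∀ t0, 1 ≤ t0 →
      ((Finset.Icc t0 (t0 + Γ - 1)).filter (fun t => k ∈ S t)).card = 1 :=
    fun k t0 ht0 => (key t0 ht0).2 k
  have huniq : ∀ k : Fin K, ∀ t0, 1 ≤ t0 → ∀ a b,
      a ∈ Finset.Icc t0 (t0 + Γ - 1) → k ∈ S a →
      b ∈ Finset.Icc t0 (t0 + Γ - 1) → k ∈ S b → a = b := by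
    intro k t0 ht0 a b ha hka hb hkb
    exact Finset.card_le_one.mp (le_of_eq (honce k t0 ht0)) a
      (Finset.mem_filter.mpr ⟨ha, hka⟩) b (Finset.mem_filter.mpr ⟨hb, hkb⟩)
  refine ⟨fun t ht => (key t ht).1 t (Finset.mem_Icc.mpr ⟨le_refl t, by omega⟩),
    honce, ?_⟩
  intro t ht
  ext k
  constructor
  · -- k ∈ S (t+Γ) → k ∈ S t
    intro hk
    obtain ⟨u, hu, hku⟩ := hwin k t ht
    have hu' := Finset.mem_Icc.mp hu
    by_cases hut : u = t
    · exact hut ▸ hku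
    · exfalso
      have h1 : u ∈ Finset.Icc (t+1) (t+1+Γ-1) := Finset.mem_Icc.mpr (by omega)
      have h2 : t + Γ ∈ Finset.Icc (t+1) (t+1+Γ-1) := Finset.mem_Icc.mpr (by omega)
      have := huniq k (t+1) (by omega) u (t+Γ) h1 hku h2 hk
      omega
  · -- k ∈ S t → k ∈ S (t+Γ)
    intro hk
    obtain ⟨u, hu, hku⟩ := hwin k (t+1) (by omega)
    have hu' := Finset.mem_Icc.mp hu
    by_cases hug : u = t + Γ
    · exact hug ▸ hku
    · exfalso
      have h1 : u ∈ Finset.Icc t (t+Γ-1) := Finset.mem_Icc.mpr (by omega)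
      have h2 : t ∈ Finset.Icc t (t+Γ-1) := Finset.mem_Icc.mpr (by omega)
      have := huniq k t ht u t h1 hku h2 hk
      omega
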